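/- For every integer d ≥ 1 and every n ≥ 1, b^c_{d,2}(2n) equals the number of rooted ordered binary trees with n vertices in which every right edge carries one of d possible labels and in which, whenever v_1, …, v_k is a path such that each {v_i, v_{i+1}} is a right edge and each intermediate vertex v_2, …, v_{k−1} has no left child, the labels along that chain are weakly increasing. -/
import Mathlib


namespace MultiOp

mutual
inductive Atom (d : ℕ) : Type where
  | star : Atom d
  | op : Fin d → Mon d → Atom d
inductive Mon (d : ℕ) : Type where
  | single : Atom d → Mon d
  | cons : Atom d → Mon d → Mon d
end

mutual
def Atom.deg {d : ℕ} : Atom d → ℕ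
  | .star => 1
  | .op _ v => v.deg
def Mon.deg {d : ℕ} : Mon d → ℕ
  | .single a => a.deg
  | .cons a v => a.deg + v.deg
end

mutual
def Atom.mult {d : ℕ} : Atom d → Fin d → ℕ
  | .star, _ => 0
  | .op i v, j => (if i = j then 1 else 0) + v.mult j
def Mon.mult {d : ℕ} : Mon d → Fin d → ℕ
  | .single a, j => a.mult j
  | .cons a v, j => a.mult j + v.mult j
end

noncomputable def a (d r : ℕ) (s : Fin d → ℕ) : ℕ :=
  Nat.card {v : Mon d // v.deg = r ∧ v.mult = s}

noncomputable def b (d ℓ n : ℕ) : ℕ :=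
  Nat.card {v : Mon d // ℓ * v.deg + 2 * (∑ i, v.mult i) = n}

noncomputable def A (d : ℕ) : MvPowerSeries (Option (Fin d)) ℚ :=
  fun e => (a d (e none) (fun i => e (some i)) : ℚ)

noncomputable def B (d ℓ : ℕ) : PowerSeries ℚ :=
  PowerSeries.mk fun n => (b d ℓ n : ℚ)

def narayana (n k : ℕ) : ℚ := (n.choose k * n.choose (k + 1) : ℚ) / n

/-- Concatenation (the associative multiplication) of monomials. -/
def Mon.mul {d : ℕ} : Mon d → Mon d → Mon d
  | .single a, w => .cons a w
  | .cons a v, w => .cons a (v.mul w)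

/-- Application of the unary operator `P i` to a monomial. -/
def Mon.P {d : ℕ} (i : Fin d) (v : Mon d) : Mon d := .single (.op i v)

/- Canonical monomials: along every maximal nested chain of unary operators the
operator indices are weakly increasing, i.e. a subword `P i (P j (⋯))` occurs only
when `i ≤ j`. -/
mutual
inductive AtomCanon : {d : ℕ} → Atom d → Prop where
  | star {d : ℕ} : AtomCanon (Atom.star : Atom d)
  | op {d : ℕ} (i : Fin d) (v : Mon d) : MonCanon v →
      (∀ (j : Fin d) (w : Mon d), v = Mon.single (Atom.op j w) → i ≤ j) →
      AtomCanon (Atom.op i v)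
inductive MonCanon : {d : ℕ} → Mon d → Prop where
  | single {d : ℕ} (a : Atom d) : AtomCanon a → MonCanon (Mon.single a)
  | cons {d : ℕ} (a : Atom d) (v : Mon d) : AtomCanon a → MonCanon v →
      MonCanon (Mon.cons a v)
end

/-- `b^c_{d,ℓ}(n)`: the number of canonical monomials `v` with
`ℓ·deg(v) + 2·(s₁+⋯+s_d) = n`, where `s` is the multiplicity vector of `v`. -/
noncomputable def bc (d ℓ n : ℕ) : ℕ :=
  Nat.card {v : Mon d // MonCanon v ∧ ℓ * v.deg + 2 * (∑ i, v.mult i) = n}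

/-- Rooted ordered binary trees in which every vertex has an optional left child and an
optional right child, and every right edge carries a label in `Fin d`
(left edges are unlabeled). -/
inductive BTree (d : ℕ) : Type where
  | leaf : BTree d
  | left : BTree d → BTree d
  | right : Fin d → BTree d → BTree d
  | both : BTree d → Fin d → BTree d → BTree d

/-- The number of vertices of a labeled binary tree. -/
def BTree.size {d : ℕ} : BTree d → ℕ
  | .leaf => 1
  | .left l => 1 + l.size
  | .right _ r => 1 + r.size
  | .both l _ r => 1 + l.size + r.size

/-- Canonical labeled binary trees: whenever `v₁, …, v_k` is a path of right edges whose
intermediate vertices have no left child, the labels along the chain are weakly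
increasing. Equivalently (by transitivity), for every right edge labeled `i` whose lower
endpoint has no left child and has a right edge labeled `j`, we have `i ≤ j`; a vertex
with no left child whose right edge is labeled `j` is exactly a subtree of the form
`BTree.right j r'`. -/
inductive BTreeCanon : {d : ℕ} → BTree d → Prop where
  | leaf {d : ℕ} : BTreeCanon (BTree.leaf : BTree d)
  | left {d : ℕ} (l : BTree d) : BTreeCanon l → BTreeCanon (BTree.left l)
  | right {d : ℕ} (i : Fin d) (r : BTree d) : BTreeCanon r →
      (∀ (j : Fin d) (r' : BTree d), r = BTree.right j r' → i ≤ j) →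
      BTreeCanon (BTree.right i r)
  | both {d : ℕ} (l : BTree d) (i : Fin d) (r : BTree d) :
      BTreeCanon l → BTreeCanon r →
      (∀ (j : Fin d) (r' : BTree d), r = BTree.right j r' → i ≤ j) →
      BTreeCanon (BTree.both l i r)

mutual
def Atom.toTree {d : ℕ} : Atom d → BTree d
  | .star => .leaf
  | .op i w => .right i w.toTree
def Mon.toTree {d : ℕ} : Mon d → BTree d
  | .single a => a.toTree
  | .cons .star v => .left v.toTree
  | .cons (.op i w) v => .both v.toTree i w.toTree
end

def BTree.toMon {d : ℕ} : BTree d → Mon d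
  | .leaf => .single .star
  | .left l => .cons .star l.toMon
  | .right i r => .single (.op i r.toMon)
  | .both l i r => .cons (.op i r.toMon) l.toMon

mutual
theorem atom_inv {d : ℕ} : ∀ a : Atom d, BTree.toMon (Atom.toTree a) = Mon.single a
  | .star => rfl
  | .op i w => by simp [Atom.toTree, BTree.toMon, mon_inv w]
theorem mon_inv {d : ℕ} : ∀ v : Mon d, BTree.toMon (Mon.toTree v) = v
  | .single a => atom_inv a
  | .cons .star v => by simp [Mon.toTree, BTree.toMon, mon_inv v]
  | .cons (.op i w) v => by simp [Mon.toTree, BTree.toMon, mon_inv v, mon_inv w]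
end

theorem tree_inv {d : ℕ} : ∀ t : BTree d, Mon.toTree (BTree.toMon t) = t
  | .leaf => rfl
  | .left l => by simp [BTree.toMon, Mon.toTree, tree_inv l]
  | .right i r => by simp [BTree.toMon, Mon.toTree, Atom.toTree, tree_inv r]
  | .both l i r => by simp [BTree.toMon, Mon.toTree, tree_inv l, tree_inv r]

mutual
theorem atom_size {d : ℕ} : ∀ a : Atom d,
    (Atom.toTree a).size = a.deg + ∑ i, a.mult i
  | .star => by simp [Atom.toTree, BTree.size, Atom.deg, Atom.mult]
  | .op i w => by
      simp [Atom.toTree, BTree.size, Atom.deg, Atom.mult, mon_size w,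
        Finset.sum_add_distrib, Finset.sum_ite_eq]
      ring
theorem mon_size {d : ℕ} : ∀ v : Mon d,
    (Mon.toTree v).size = v.deg + ∑ i, v.mult i
  | .single a => atom_size a
  | .cons a v => by
      have ha := atom_size a
      have hv := mon_size v
      match a with
      | .star =>
        simp only [Atom.toTree, BTree.size, Atom.deg, Atom.mult] at ha
        simp only [Mon.toTree, BTree.size, Mon.deg, Mon.mult, hv,
          Atom.deg, Atom.mult, Finset.sum_add_distrib]
        omega
      | .op i w =>
        simp only [Atom.toTree, BTree.size, Atom.deg, Atom.mult] at ha
        simp only [Mon.toTree, BTree.size, Mon.deg, Mon.mult, hv,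
          Atom.deg, Atom.mult, Finset.sum_add_distrib] at *
        omega
end

theorem toTree_right {d : ℕ} (v : Mon d) (j : Fin d) (r' : BTree d)
    (h : v.toTree = BTree.right j r') : ∃ u, v = Mon.single (Atom.op j u) := by
  match v with
  | .single .star => simp [Mon.toTree, Atom.toTree] at h
  | .single (.op j' u) =>
    simp only [Mon.toTree, Atom.toTree, BTree.right.injEq] at h
    exact ⟨u, by rw [h.1]⟩
  | .cons .star v => simp [Mon.toTree] at h
  | .cons (.op i w) v => simp [Mon.toTree] at h

theorem toMon_single_op {d : ℕ} (t : BTree d) (j : Fin d) (u : Mon d)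
    (h : t.toMon = Mon.single (Atom.op j u)) : ∃ r', t = BTree.right j r' := by
  match t with
  | .leaf => simp [BTree.toMon] at h
  | .left l => simp [BTree.toMon] at h
  | .right i r =>
    simp only [BTree.toMon, Mon.single.injEq, Atom.op.injEq] at h
    exact ⟨r, by rw [h.1]⟩
  | .both l i r => simp [BTree.toMon] at h

mutual
theorem atom_canon {d : ℕ} : ∀ a : Atom d, AtomCanon a → BTreeCanon a.toTree
  | .star, _ => BTreeCanon.leaf
  | .op i w, h => by
      cases h with
      | op _ _ hw hle =>
        exact BTreeCanon.right i w.toTree (mon_canon w hw) (fun j r' hr => by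
          obtain ⟨u, hu⟩ := toTree_right w j r' hr
          exact hle j u hu)
theorem mon_canon {d : ℕ} : ∀ v : Mon d, MonCanon v → BTreeCanon v.toTree
  | .single a, h => by
      cases h with
      | single _ ha => exact atom_canon a ha
  | .cons .star v, h => by
      cases h with
      | cons _ _ ha hv => exact BTreeCanon.left v.toTree (mon_canon v hv)
  | .cons (.op i w) v, h => by
      cases h with
      | cons _ _ ha hv =>
        cases ha with
        | op _ _ hw hle =>
          exact BTreeCanon.both v.toTree i w.toTree (mon_canon v hv)
            (mon_canon w hw) (fun j r' hr => by
              obtain ⟨u, hu⟩ := toTree_right w j r' hr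
              exact hle j u hu)
end

theorem tree_canon {d : ℕ} : ∀ t : BTree d, BTreeCanon t → MonCanon t.toMon := by
  intro t h
  induction h with
  | leaf => exact MonCanon.single _ AtomCanon.star
  | left l _ ih => exact MonCanon.cons _ _ AtomCanon.star ih
  | right i r _ hle ih =>
    exact MonCanon.single _ (AtomCanon.op i r.toMon ih (fun j w hw => by
      obtain ⟨r', hr⟩ := toMon_single_op r j w hw
      exact hle j r' hr))
  | both l i r _ _ hle ihl ihr =>
    exact MonCanon.cons _ _ (AtomCanon.op i r.toMon ihr (fun j w hw => by
      obtain ⟨r', hr⟩ := toMon_single_op r j w hw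
      exact hle j r' hr)) ihl

/-- For every `n ≥ 1`, `b^c_{d,2}(2n)` counts rooted ordered binary trees with `n`
vertices in which every right edge carries one of `d` labels and the labels are weakly
increasing along every chain of right edges whose intermediate vertices have no left
child. -/
theorem bc_two_eq_card_canonical_btrees (d n : ℕ) (hd : 1 ≤ d) (hn : 1 ≤ n) :
    bc d 2 (2 * n) = Nat.card {t : BTree d // BTreeCanon t ∧ t.size = n} := by
  apply Nat.card_congr
  refine ⟨fun v => ⟨v.1.toTree, mon_canon v.1 v.2.1, ?_⟩,
    fun t => ⟨t.1.toMon, tree_canon t.1 t.2.1, ?_⟩,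
    fun v => Subtype.ext (mon_inv v.1), fun t => Subtype.ext (tree_inv t.1)⟩
  · have := mon_size v.1
    have := v.2.2
    omega
  · have := mon_size (t.1.toMon)
    rw [tree_inv t.1] at this
    have := t.2.2
    omega

end MultiOp
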